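/- Let n ≥ 1, d ≥ 1 and let G be a subgroup of GL_{n+1}(ℂ). The collection of all maximal G-invariant subspaces of Form_{n,d} (maximal with respect to inclusion among G-invariant subspaces) is finite. -/
import Mathlib


open MvPolynomial

/-- The action of a matrix on a polynomial: `(A f)(x) = f (A x)`. -/
noncomputable def matAct {N : ℕ} (A : Matrix (Fin N) (Fin N) ℂ)
    (f : MvPolynomial (Fin N) ℂ) : MvPolynomial (Fin N) ℂ :=
  MvPolynomial.aeval (fun i => ∑ j, MvPolynomial.C (A i j) * MvPolynomial.X j) f

/-- A subspace `V` of `Form_{n,d}` is `G`-invariant if `A f ∼ f` for every nonzero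
`f ∈ V` and every `A ∈ G`. -/
def IsGInvariant {N : ℕ} (G : Subgroup (GL (Fin N) ℂ)) (d : ℕ)
    (V : Submodule ℂ (MvPolynomial (Fin N) ℂ)) : Prop :=
  V ≤ MvPolynomial.homogeneousSubmodule (Fin N) ℂ d ∧
    ∀ f ∈ V, f ≠ 0 → ∀ A ∈ G,
      ∃ c : ℂ, c ≠ 0 ∧ matAct (A : Matrix (Fin N) (Fin N) ℂ) f = c • f

theorem matAct_add' {N : ℕ} (A : Matrix (Fin N) (Fin N) ℂ) (f g : MvPolynomial (Fin N) ℂ) :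
    matAct A (f + g) = matAct A f + matAct A g := map_add _ f g

theorem matAct_smul' {N : ℕ} (A : Matrix (Fin N) (Fin N) ℂ) (c : ℂ) (f : MvPolynomial (Fin N) ℂ) :
    matAct A (c • f) = c • matAct A f := map_smul (MvPolynomial.aeval _) c f

theorem matAct_zero' {N : ℕ} (A : Matrix (Fin N) (Fin N) ℂ) : matAct A 0 = 0 :=
  map_zero (MvPolynomial.aeval _)

theorem matAct_neg' {N : ℕ} (A : Matrix (Fin N) (Fin N) ℂ) (f : MvPolynomial (Fin N) ℂ) :
    matAct A (-f) = - matAct A f := map_neg (MvPolynomial.aeval _) f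

theorem matAct_sum' {N : ℕ} (A : Matrix (Fin N) (Fin N) ℂ) {ι : Type*} (t : Finset ι)
    (f : ι → MvPolynomial (Fin N) ℂ) :
    matAct A (∑ i ∈ t, f i) = ∑ i ∈ t, matAct A (f i) :=
  map_sum (MvPolynomial.aeval _) f t

/-- Scalar cancellation for a nonzero polynomial. -/
theorem scal_cancel' {N : ℕ} {u : MvPolynomial (Fin N) ℂ} (hu : u ≠ 0) {a b : ℂ}
    (h : a • u = b • u) : a = b := by
  by_contra hne
  have h1 : (a - b) • u = 0 := by rw [sub_smul, h, sub_self]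
  have h2 : u = 0 := by
    have h3 := congrArg (fun x => (a - b)⁻¹ • x) h1
    simpa [smul_smul, inv_mul_cancel₀ (sub_ne_zero.mpr hne)] using h3
  exact hu h2

theorem scal_zero' {N : ℕ} {u : MvPolynomial (Fin N) ℂ} (hu : u ≠ 0) {a : ℂ}
    (h : a • u = 0) : a = 0 := by
  apply scal_cancel' hu
  rw [h, zero_smul]

/-- In a `G`-invariant subspace, all nonzero vectors have the same eigenvalue for a
given `A ∈ G`. -/
theorem eigen_eq' {N : ℕ} {G : Subgroup (GL (Fin N) ℂ)} {d : ℕ}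
    {V : Submodule ℂ (MvPolynomial (Fin N) ℂ)} (hV : IsGInvariant G d V)
    {f g : MvPolynomial (Fin N) ℂ} (hf : f ∈ V) (hg : g ∈ V) (hf0 : f ≠ 0) (hg0 : g ≠ 0)
    {A : GL (Fin N) ℂ} (hA : A ∈ G) {c c' : ℂ}
    (hcf : matAct (A : Matrix (Fin N) (Fin N) ℂ) f = c • f)
    (hcg : matAct (A : Matrix (Fin N) (Fin N) ℂ) g = c' • g) : c = c' := by
  by_cases hfg : f + g = 0
  · have hgf : g = -f := by
      rw [← neg_eq_of_add_eq_zero_right hfg]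
    have h1 : matAct (A : Matrix (Fin N) (Fin N) ℂ) g = c • g := by
      rw [hgf, matAct_neg', hcf, smul_neg]
    exact scal_cancel' hg0 (h1.symm.trans hcg)
  · obtain ⟨e, he0, he⟩ := hV.2 (f + g) (V.add_mem hf hg) hfg A hA
    have hsum : c • f + c' • g = e • f + e • g := by
      have h1 : matAct (A : Matrix (Fin N) (Fin N) ℂ) (f + g) = c • f + c' • g := by
        rw [matAct_add', hcf, hcg]
      rw [he, smul_add] at h1
      exact h1.symm
    have key : (c - e) • f = (e - c') • g := by
      calc (c - e) • f = (c • f + c' • g) - (e • f + c' • g) := by rw [sub_smul]; abel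
        _ = (e • f + e • g) - (e • f + c' • g) := by rw [hsum]
        _ = (e - c') • g := by rw [sub_smul]; abel
    by_cases hce : c = e
    · have h2 : (e - c') • g = 0 := by rw [← key, hce, sub_self, zero_smul]
      have h3 : e - c' = 0 := scal_zero' hg0 h2
      rw [hce, ← sub_eq_zero]
      exact h3
    · set μ : ℂ := (c - e)⁻¹ * (e - c') with hμ
      have hf_eq : f = μ • g := by
        have h2 : (c - e)⁻¹ • ((c - e) • f) = (c - e)⁻¹ • ((e - c') • g) := by rw [key]
        rw [smul_smul, smul_smul, inv_mul_cancel₀ (sub_ne_zero.mpr hce), one_smul] at h2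
        exact h2
      have hμ0 : μ ≠ 0 := fun h => hf0 (by rw [hf_eq, h, zero_smul])
      have h1 : matAct (A : Matrix (Fin N) (Fin N) ℂ) f = (μ * c') • g := by
        rw [hf_eq, matAct_smul', hcg, smul_smul]
      have h2 : matAct (A : Matrix (Fin N) (Fin N) ℂ) f = (c * μ) • g := by
        rw [hcf, hf_eq, smul_smul]
      have h3 : μ * c' = c * μ := scal_cancel' hg0 (h1.symm.trans h2)
      have h4 : μ * c' = μ * c := by rw [h3]; ring
      exact (mul_left_cancel₀ hμ0 h4).symm

theorem stmt3 {n d : ℕ} (hn : 1 ≤ n) (hd : 1 ≤ d)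
    (G : Subgroup (GL (Fin (n + 1)) ℂ)) :
    {V : Submodule ℂ (MvPolynomial (Fin (n + 1)) ℂ) |
      IsGInvariant G d V ∧ ∀ W, IsGInvariant G d W → V ≤ W → W = V}.Finite := by
  classical
  set S' : Set (Submodule ℂ (MvPolynomial (Fin (n + 1)) ℂ)) :=
    {V | (IsGInvariant G d V ∧ ∀ W, IsGInvariant G d W → V ≤ W → W = V) ∧ V ≠ ⊥} with hS'
  suffices hfin : S'.Finite by
    apply Set.Finite.subset (hfin.insert ⊥)
    intro V hV
    by_cases hb : V = ⊥
    · rw [hb]; exact Set.mem_insert _ _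
    · exact Set.mem_insert_of_mem _ ⟨hV, hb⟩
  -- choose a nonzero vector in each element of S'
  have hex : ∀ V : Submodule ℂ (MvPolynomial (Fin (n + 1)) ℂ),
      ∃ f, V ∈ S' → f ∈ V ∧ f ≠ 0 := by
    intro V
    by_cases h : V ∈ S'
    · obtain ⟨f, hf, hf0⟩ := V.ne_bot_iff.mp h.2
      exact ⟨f, fun _ => ⟨hf, hf0⟩⟩
    · exact ⟨0, fun hh => absurd hh h⟩
  choose F hF using hex
  -- choose the character values
  have hexχ : ∀ (V : Submodule ℂ (MvPolynomial (Fin (n + 1)) ℂ)) (A : GL (Fin (n + 1)) ℂ),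
      ∃ c : ℂ, V ∈ S' → A ∈ G →
        c ≠ 0 ∧ matAct (A : Matrix (Fin (n + 1)) (Fin (n + 1)) ℂ) (F V) = c • F V := by
    intro V A
    by_cases h : V ∈ S' ∧ A ∈ G
    · obtain ⟨c, hc⟩ := h.1.1.1.2 (F V) (hF V h.1).1 (hF V h.1).2 A h.2
      exact ⟨c, fun _ _ => hc⟩
    · exact ⟨1, fun h1 h2 => absurd ⟨h1, h2⟩ h⟩
  choose χ hχ using hexχ
  -- distinct elements of S' have distinct characters
  have key : ∀ V ∈ S', ∀ W ∈ S', (∀ A ∈ G, χ V A = χ W A) → V = W := by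
    intro V hV W hW hall
    have eigV : ∀ A ∈ G, ∀ u ∈ V, matAct (A : Matrix (Fin (n + 1)) (Fin (n + 1)) ℂ) u
        = χ V A • u := by
      intro A hA u hu
      by_cases hu0 : u = 0
      · rw [hu0, matAct_zero', smul_zero]
      · obtain ⟨c, hc0, hc⟩ := hV.1.1.2 u hu hu0 A hA
        have := eigen_eq' hV.1.1 hu (hF V hV).1 hu0 (hF V hV).2 hA hc (hχ V A hV hA).2
        rw [hc, this]
    have eigW : ∀ A ∈ G, ∀ u ∈ W, matAct (A : Matrix (Fin (n + 1)) (Fin (n + 1)) ℂ) u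
        = χ W A • u := by
      intro A hA u hu
      by_cases hu0 : u = 0
      · rw [hu0, matAct_zero', smul_zero]
      · obtain ⟨c, hc0, hc⟩ := hW.1.1.2 u hu hu0 A hA
        have := eigen_eq' hW.1.1 hu (hF W hW).1 hu0 (hF W hW).2 hA hc (hχ W A hW hA).2
        rw [hc, this]
    have hinv : IsGInvariant G d (V ⊔ W) := by
      constructor
      · exact sup_le hV.1.1.1 hW.1.1.1
      · intro h hh hh0 A hA
        obtain ⟨u, hu, w, hw, rfl⟩ := Submodule.mem_sup.mp hh
        refine ⟨χ V A, (hχ V A hV hA).1, ?_⟩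
        rw [matAct_add', eigV A hA u hu, eigW A hA w hw, ← hall A hA, smul_add]
    have h1 : V ⊔ W = V := hV.1.2 _ hinv le_sup_left
    have h2 : W ≤ V := h1 ▸ le_sup_right
    exact (hW.1.2 V hV.1.1 h2)
  -- linear independence of the chosen vectors, by strong induction on finsets
  have indep : ∀ m : ℕ, ∀ t : Finset (Submodule ℂ (MvPolynomial (Fin (n + 1)) ℂ)),
      t.card = m → ↑t ⊆ S' → ∀ c : Submodule ℂ (MvPolynomial (Fin (n + 1)) ℂ) → ℂ,
      ∑ V ∈ t, c V • F V = 0 → ∀ V ∈ t, c V = 0 := by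
    intro m
    induction m using Nat.strong_induction_on with
    | _ m IH =>
      intro t hcard hts c hsum V₀ hV₀
      by_cases hone : ∀ V ∈ t, V = V₀
      · have ht : t = {V₀} := Finset.eq_singleton_iff_unique_mem.mpr ⟨hV₀, hone⟩
        rw [ht, Finset.sum_singleton] at hsum
        exact scal_zero' (hF V₀ (hts (Finset.mem_coe.mpr hV₀))).2 hsum
      · push_neg at hone
        obtain ⟨V₁, hV₁t, hV₁⟩ := hone
        obtain ⟨A, hA, hχne⟩ : ∃ A ∈ G, χ V₁ A ≠ χ V₀ A := by
          by_contra hcon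
          push_neg at hcon
          exact hV₁ (key V₁ (hts (Finset.mem_coe.mpr hV₁t)) V₀
            (hts (Finset.mem_coe.mpr hV₀)) hcon)
        -- apply the action of A to the relation
        have hsum2 : ∑ V ∈ t, (c V * χ V A) • F V = 0 := by
          have h1 : ∑ V ∈ t, matAct (A : Matrix (Fin (n + 1)) (Fin (n + 1)) ℂ) (c V • F V)
              = 0 := by
            rw [← matAct_sum', hsum, matAct_zero']
          rw [← h1]
          apply Finset.sum_congr rfl
          intro V hV
          rw [matAct_smul', (hχ V A (hts (Finset.mem_coe.mpr hV)) hA).2, smul_smul]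
        -- subtract χ V₀ A times the original relation
        have e2 : ∑ V ∈ t, (χ V₀ A * c V) • F V = 0 := by
          calc ∑ V ∈ t, (χ V₀ A * c V) • F V = χ V₀ A • ∑ V ∈ t, c V • F V := by
                rw [Finset.smul_sum]
                apply Finset.sum_congr rfl
                intro V _
                rw [smul_smul]
            _ = 0 := by rw [hsum, smul_zero]
        have hsub : ∑ V ∈ t, (c V * (χ V A - χ V₀ A)) • F V = 0 := by
          have e1 : ∀ V ∈ t, (c V * (χ V A - χ V₀ A)) • F V
              = (c V * χ V A) • F V - (χ V₀ A * c V) • F V := by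
            intro V _
            rw [← sub_smul]
            congr 1
            ring
          rw [Finset.sum_congr rfl e1, Finset.sum_sub_distrib, hsum2, e2, sub_zero]
        -- restrict to t.erase V₀
        have hsub' : ∑ V ∈ t.erase V₀, (c V * (χ V A - χ V₀ A)) • F V = 0 := by
          have h2 := Finset.add_sum_erase t (fun V => (c V * (χ V A - χ V₀ A)) • F V) hV₀
          rw [hsub] at h2
          simp only [sub_self, mul_zero, zero_smul, zero_add] at h2
          exact h2
        have hcard0 : (t.erase V₀).card < m := hcard ▸ Finset.card_erase_lt_of_mem hV₀
        have herase0sub : ↑(t.erase V₀) ⊆ S' := fun V hV =>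
          hts (Finset.mem_coe.mpr (Finset.mem_of_mem_erase (Finset.mem_coe.mp hV)))
        have hc1 : c V₁ * (χ V₁ A - χ V₀ A) = 0 :=
          IH _ hcard0 _ rfl herase0sub _ hsub' V₁ (Finset.mem_erase.mpr ⟨hV₁, hV₁t⟩)
        have hcV₁ : c V₁ = 0 := by
          rcases mul_eq_zero.mp hc1 with h | h
          · exact h
          · exact absurd (sub_eq_zero.mp h) hχne
        -- now restrict the original relation to t.erase V₁
        have hsum3 : ∑ V ∈ t.erase V₁, c V • F V = 0 := by
          have h2 := Finset.add_sum_erase t (fun V => c V • F V) hV₁t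
          rw [hsum] at h2
          simp only [hcV₁, zero_smul, zero_add] at h2
          exact h2
        have hcard1 : (t.erase V₁).card < m := hcard ▸ Finset.card_erase_lt_of_mem hV₁t
        have herase1sub : ↑(t.erase V₁) ⊆ S' := fun V hV =>
          hts (Finset.mem_coe.mpr (Finset.mem_of_mem_erase (Finset.mem_coe.mp hV)))
        exact IH _ hcard1 _ rfl herase1sub _ hsum3 V₀
          (Finset.mem_erase.mpr ⟨fun h => hV₁ h.symm, hV₀⟩)
  -- conclude finiteness
  by_contra hinf
  have hinf' : S'.Infinite := hinf
  obtain ⟨t, hts, hcard⟩ := hinf'.exists_subset_card_eq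
    (Module.finrank ℂ (restrictTotalDegree (Fin (n + 1)) ℂ d) + 1)
  have hmem : ∀ V ∈ t, F V ∈ restrictTotalDegree (Fin (n + 1)) ℂ d := by
    intro V hV
    have h1 : F V ∈ homogeneousSubmodule (Fin (n + 1)) ℂ d :=
      (hts (Finset.mem_coe.mpr hV)).1.1.1 (hF V (hts (Finset.mem_coe.mpr hV))).1
    rw [mem_restrictTotalDegree]
    exact ((mem_homogeneousSubmodule _ _).mp h1).totalDegree_le
  let g : {x // x ∈ t} → restrictTotalDegree (Fin (n + 1)) ℂ d :=
    fun i => ⟨F i.1, hmem i.1 i.2⟩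
  have hli : LinearIndependent ℂ g := by
    rw [linearIndependent_iff']
    intro s coefs hsum i hi
    have h0 : ∑ i ∈ s, coefs i • F i.1 = 0 := by
      have h1 := congrArg
        (fun x : restrictTotalDegree (Fin (n + 1)) ℂ d =>
          (x : MvPolynomial (Fin (n + 1)) ℂ)) hsum
      simpa [g] using h1
    set c' : Submodule ℂ (MvPolynomial (Fin (n + 1)) ℂ) → ℂ :=
      fun V => if h : V ∈ t then coefs ⟨V, h⟩ else 0 with hc'
    have h2 : ∑ V ∈ s.image Subtype.val, c' V • F V = 0 := by
      rw [Finset.sum_image (fun a _ b _ h => Subtype.val_injective h), ← h0]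
      apply Finset.sum_congr rfl
      intro j _
      simp [hc', j.2]
    have hsub : ↑(s.image Subtype.val) ⊆ S' := by
      intro V hV
      rw [Finset.coe_image] at hV
      obtain ⟨j, _, rfl⟩ := hV
      exact hts (Finset.mem_coe.mpr j.2)
    have h3 := indep _ _ rfl hsub c' h2 i.1 (Finset.mem_image_of_mem _ hi)
    have h4 : c' i.1 = coefs i := by simp [hc', i.2]
    rw [← h4]
    exact h3
  have hle := hli.fintype_card_le_finrank
  rw [Fintype.card_coe, hcard] at hle
  omega
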